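/- Let f ∈ 𝔽. For i = 1, 2, let X_i be a random variable with values in a measurable space (Ω_i, 𝓕_i) (both on the same probability space) and φ_i a measurable function from (Ω_i, 𝓕_i) to a measurable space (E_i, 𝓔_i). Then: (i) Marginal invariance: if d(P_{X₁} ⊗ P_{X₂})/dP_{(X₁,X₂)} is σ(φ₁) ⊗ σ(φ₂)-measurable, then S_f(X₁, X₂) = S_f(φ₁(X₁), φ₂(X₂)); (ii) Invariance by injection: if each φ_i is injective and bi-measurable, then S_f(X₁, X₂) = S_f(φ₁(X₁), φ₂(X₂)); (iii) Invariance for independent Markovian kernels: if X_i = (Y_i, W_i) takes values in a Polish space for i = 1, 2, and P_{(W₁,W₂)|(Y₁,Y₂)=(y₁,y₂)}(dw₁, dw₂) = P_{W₁|Y₁=y₁}(dw₁) P_{W₂|Y₂=y₂}(dw₂) holds P_{(Y₁,Y₂)}-a.s., then S_f((Y₁,W₁), (Y₂,W₂)) = S_f(Y₁, Y₂). -/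

import Mathlib

open MeasureTheory ProbabilityTheory Filter Set Topology
open scoped ENNReal NNReal

noncomputable section

/-- Extended-real positive part, as a value in `ℝ≥0∞`. -/
def EReal.toENNReal' (x : EReal) : ℝ≥0∞ :=
  if x = ⊤ then ⊤ else ENNReal.ofReal x.toReal

/-- Quasi-integrability of an extended-real-valued function: the positive part or the negative
part has finite integral. -/
def QuasiIntegrable {Ω : Type*} [MeasurableSpace Ω] (μ : Measure Ω) (g : Ω → EReal) : Prop :=
  (∫⁻ ω, (g ω).toENNReal' ∂μ) < ⊤ ∨ (∫⁻ ω, (-(g ω)).toENNReal' ∂μ) < ⊤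

/-- The integral of an extended-real-valued function, defined as the difference of the
integrals of the positive and negative parts. -/
def eInt {Ω : Type*} [MeasurableSpace Ω] (μ : Measure Ω) (g : Ω → EReal) : EReal :=
  ((∫⁻ ω, (g ω).toENNReal' ∂μ : ℝ≥0∞) : EReal) - ((∫⁻ ω, (-(g ω)).toENNReal' ∂μ : ℝ≥0∞) : EReal)

/-- `f` is strictly convex at the point `z`. -/
def StrictConvexAt (f : ℝ → EReal) (z : ℝ) : Prop :=
  ∀ x y α : ℝ, x ≠ z → y ≠ z → 0 < α → α < 1 → z = α * x + (1 - α) * y →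
    f z < (α : EReal) * f x + ((1 - α : ℝ) : EReal) * f y

/-- The class `𝔽` of proper convex functions `f : ℝ → (-∞, +∞]` with domain contained in
`[0, ∞)`, right-continuous at `0`, with `f 1 = 0` and `1` in the interior of the domain. -/
structure MemF (f : ℝ → EReal) : Prop where
  ne_bot : ∀ x, f x ≠ ⊥
  convex : ∀ x y α : ℝ, 0 ≤ α → α ≤ 1 →
    f (α * x + (1 - α) * y) ≤ (α : EReal) * f x + ((1 - α : ℝ) : EReal) * f y
  top_of_neg : ∀ x : ℝ, x < 0 → f x = ⊤
  right_continuous_at_zero : Tendsto f (nhdsWithin 0 (Set.Ioi 0)) (nhds (f 0))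
  one_eq_zero : f 1 = 0
  one_mem_interior_dom : ∃ ε : ℝ, 0 < ε ∧ ∀ x : ℝ, |x - 1| < ε → f x ≠ ⊤

/-- The value `f*(0) = lim_{t → ∞} f(t)/t` of the convex conjugate at `0`. -/
def fStarZero (f : ℝ → EReal) : EReal :=
  Filter.limsup (fun t : ℝ => ((t⁻¹ : ℝ) : EReal) * f t) Filter.atTop

/-- The convex conjugate `f*` of `f ∈ 𝔽`: `f*(t) = t f(1/t)` for `t > 0`,
`f*(0) = lim_{t→∞} f(t)/t`, and `f* = ⊤` on negative reals. -/
def fConj (f : ℝ → EReal) : ℝ → EReal := fun t =>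
  if 0 < t then ((t : ℝ) : EReal) * f t⁻¹
  else if t = 0 then fStarZero f
  else ⊤

/-- The ratio `dP/dQ` defined `(P+Q)`-a.e. via densities w.r.t. `λ = P + Q`, with the
conventions `0/0 = ∞/∞ = 0` (which are those of `ℝ≥0∞` division). -/
def rnRatio {Ω : Type*} [MeasurableSpace Ω] (P Q : Measure Ω) : Ω → ℝ≥0∞ :=
  fun ω => P.rnDeriv (P + Q) ω / Q.rnDeriv (P + Q) ω

/-- Extension of `f : ℝ → EReal` to `[0, ∞]`, with value `⊤` at `∞`. -/
def extF (f : ℝ → EReal) : ℝ≥0∞ → EReal :=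
  fun x => if x = ⊤ then ⊤ else f x.toReal

/-- The `f`-divergence `D_f(P‖Q) = ∫ f(dP/dQ) dQ + f*(0) P(dP/dQ = ∞)`.
Note that `Q(dP/dQ = ∞) = 0`, and that in `EReal` one has `f*(0) · 0 = 0`, which encodes the
convention that the second term vanishes when `P(dP/dQ = ∞) = 0`. -/
def fDiv {Ω : Type*} [MeasurableSpace Ω] (f : ℝ → EReal) (P Q : Measure Ω) : EReal :=
  eInt Q (fun ω => extF f (rnRatio P Q ω)) +
    fStarZero f * ((P {ω | rnRatio P Q ω = ⊤} : ℝ≥0∞) : EReal)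

/-- The Csiszár index `S_f(X,Y) = D_f(P_X ⊗ P_Y ‖ P_{(X,Y)})`. -/
def csiszarIndex {Ω α β : Type*} [MeasurableSpace Ω] [MeasurableSpace α] [MeasurableSpace β]
    (f : ℝ → EReal) (μ : Measure Ω) (X : Ω → α) (Y : Ω → β) : EReal :=
  fDiv f ((μ.map X).prod (μ.map Y)) (μ.map (fun ω => (X ω, Y ω)))

/-! ### Auxiliary lemmas -/

section AuxMeasurability

lemma measurable_toENNReal' : Measurable EReal.toENNReal' := by
  unfold EReal.toENNReal'
  exact Measurable.ite (measurableSet_singleton (⊤ : EReal)) measurable_const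
    (ENNReal.measurable_ofReal.comp measurable_ereal_toReal)

lemma measurable_extF {f : ℝ → EReal} (hf : Measurable f) : Measurable (extF f) := by
  unfold extF
  exact Measurable.ite (measurableSet_singleton (⊤ : ℝ≥0∞)) measurable_const
    (hf.comp ENNReal.measurable_toReal)

lemma MemF.measurable {f : ℝ → EReal} (hf : MemF f) : Measurable f := by
  apply measurable_of_Ioi
  intro x
  induction x using EReal.rec with
  | bot =>
      have : f ⁻¹' Set.Ioi ⊥ = Set.univ := by
        ext t; simp [Set.mem_preimage, bot_lt_iff_ne_bot, hf.ne_bot t]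
      rw [this]; exact MeasurableSet.univ
  | top =>
      have : f ⁻¹' Set.Ioi ⊤ = ∅ := by
        ext t; simp
      rw [this]; exact MeasurableSet.empty
  | coe c =>
      have hset : f ⁻¹' Set.Ioi (c : EReal) = {t | f t ≤ (c : EReal)}ᶜ := by
        ext t; simp [not_le]
      rw [hset]
      refine MeasurableSet.compl ?_
      refine (Convex.ordConnected ?_).measurableSet
      intro a ha b hb p q hp hq hpq
      simp only [Set.mem_setOf_eq] at ha hb ⊢
      obtain ⟨ra, hra⟩ : ∃ r : ℝ, f a = (r : EReal) :=
        ⟨(f a).toReal, (EReal.coe_toReal (ne_top_of_le_ne_top (EReal.coe_ne_top c) ha)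
          (hf.ne_bot a)).symm⟩
      obtain ⟨rb, hrb⟩ : ∃ r : ℝ, f b = (r : EReal) :=
        ⟨(f b).toReal, (EReal.coe_toReal (ne_top_of_le_ne_top (EReal.coe_ne_top c) hb)
          (hf.ne_bot b)).symm⟩
      rw [hra] at ha; rw [hrb] at hb
      have hra' : ra ≤ c := by exact_mod_cast ha
      have hrb' : rb ≤ c := by exact_mod_cast hb
      have hp1 : p ≤ 1 := by linarith
      have hq' : q = 1 - p := by linarith
      have hconv := hf.convex a b p hp hp1
      rw [hra, hrb] at hconv
      have heq : ((p * a + (1 - p) * b : ℝ)) = p • a + q • b := by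
        simp [smul_eq_mul, hq']
      rw [← heq]
      refine le_trans hconv ?_
      have hcast : (p : EReal) * (ra : EReal) + ((1 - p : ℝ) : EReal) * (rb : EReal)
          = ((p * ra + (1 - p) * rb : ℝ) : EReal) := by
        rw [← EReal.coe_mul, ← EReal.coe_mul, ← EReal.coe_add]
      rw [hcast]
      exact_mod_cast (by nlinarith : p * ra + (1 - p) * rb ≤ c)

lemma measurable_rnRatio {Ω : Type*} [MeasurableSpace Ω] (P Q : Measure Ω) :
    Measurable (rnRatio P Q) :=
  (Measure.measurable_rnDeriv _ _).div (Measure.measurable_rnDeriv _ _)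

end AuxMeasurability

section AuxCore

lemma rnDeriv_map_aux {Ω E : Type*} [MeasurableSpace Ω] [MeasurableSpace E]
    (P lam : Measure Ω) [IsFiniteMeasure P] [IsFiniteMeasure lam] (hPl : P ≪ lam)
    {T : Ω → E} (hT : Measurable T) {h : E → ℝ≥0∞} (hh : Measurable h)
    (hae : P.rnDeriv lam =ᵐ[lam] fun ω => h (T ω)) :
    (P.map T).rnDeriv (lam.map T) =ᵐ[lam.map T] h := by
  haveI : IsFiniteMeasure (lam.map T) :=
    ⟨by rw [Measure.map_apply hT MeasurableSet.univ]; exact measure_lt_top _ _⟩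
  have hwd : (lam.map T).withDensity h = P.map T := by
    ext A hA
    rw [withDensity_apply _ hA, setLIntegral_map hA hh hT, Measure.map_apply hT hA,
      ← Measure.setLIntegral_rnDeriv hPl]
    exact lintegral_congr_ae (ae_restrict_of_ae hae.symm)
  conv_lhs => rw [← hwd]
  exact Measure.rnDeriv_withDensity _ hh

/-- The key transfer lemma: if the ratio `dP/dQ` is a.e. a measurable function of `T`, then
the `f`-divergence is invariant under the pushforward by `T`. -/
lemma fDiv_map_eq {Ω E : Type*} [MeasurableSpace Ω] [MeasurableSpace E]
    {f : ℝ → EReal} (hfm : Measurable f)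
    (P Q : Measure Ω) [IsFiniteMeasure P] [IsFiniteMeasure Q]
    {T : Ω → E} (hT : Measurable T) {g : E → ℝ≥0∞} (hg : Measurable g)
    (hae : rnRatio P Q =ᵐ[P + Q] fun ω => g (T ω)) :
    fDiv f (P.map T) (Q.map T) = fDiv f P Q := by
  set lam := P + Q with hlam
  set h : E → ℝ≥0∞ := fun e => if g e = ⊤ then 1 else g e * (g e + 1)⁻¹ with hh_def
  set h' : E → ℝ≥0∞ := fun e => (g e + 1)⁻¹ with hh'_def
  have hh : Measurable h := by
    refine Measurable.ite ?_ measurable_const (hg.mul (hg.add measurable_const).inv)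
    exact hg (measurableSet_singleton ⊤)
  have hh' : Measurable h' := (hg.add measurable_const).inv
  have hsum : ∀ᵐ ω ∂lam, P.rnDeriv lam ω + Q.rnDeriv lam ω = 1 := by
    filter_upwards [Measure.rnDeriv_add P Q lam, Measure.rnDeriv_self lam] with ω h1 h2
    have : lam.rnDeriv lam ω = P.rnDeriv lam ω + Q.rnDeriv lam ω := h1
    rw [← this, h2]
  have key : ∀ᵐ ω ∂lam, P.rnDeriv lam ω = h (T ω) ∧ Q.rnDeriv lam ω = h' (T ω) := by
    filter_upwards [hae, hsum, Measure.rnDeriv_lt_top P lam, Measure.rnDeriv_lt_top Q lam]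
      with ω hr hs hpl hql
    have hr' : P.rnDeriv lam ω / Q.rnDeriv lam ω = g (T ω) := hr
    set a := P.rnDeriv lam ω
    set b := Q.rnDeriv lam ω
    by_cases hc : g (T ω) = ⊤
    · have hb : b = 0 := by
        rcases ENNReal.div_eq_top.mp (hr'.trans hc) with ⟨_, h0⟩ | ⟨ht, _⟩
        · exact h0
        · exact absurd ht hpl.ne
      have ha : a = 1 := by rw [hb, add_zero] at hs; exact hs
      refine ⟨?_, ?_⟩
      · simp [hh_def, hc, ha]
      · simp [hh'_def, hc, hb]
    · have hbne : b ≠ 0 := by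
        intro hb0
        rw [hb0] at hr' hs
        by_cases ha0 : a = 0
        · rw [ha0] at hs; simp at hs
        · rw [ENNReal.div_zero ha0] at hr'; exact hc hr'.symm
      have hab : b * g (T ω) = a := (ENNReal.eq_div_iff hbne hql.ne).mp hr'.symm
      have hne : g (T ω) + 1 ≠ 0 := by simp
      have hnt : g (T ω) + 1 ≠ ⊤ := by simp [hc]
      have hb : b = h' (T ω) := by
        have h1 : (g (T ω) + 1) * b = 1 := by
          rw [mul_comm, mul_add, hab, mul_one, hs]
        have := (ENNReal.eq_div_iff hne hnt).mpr h1
        rw [hh'_def]; simp only []; rw [this, one_div]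
      refine ⟨?_, hb⟩
      rw [hh_def]; simp only [hc, if_false]
      rw [← hab, hb, hh'_def]; simp only []; rw [mul_comm]
  have hPl : P ≪ lam := Measure.absolutelyContinuous_of_le (Measure.le_add_right le_rfl)
  have hQl : Q ≪ lam := Measure.absolutelyContinuous_of_le (Measure.le_add_left le_rfl)
  have hp : P.rnDeriv lam =ᵐ[lam] fun ω => h (T ω) := key.mono fun ω hω => hω.1
  have hq : Q.rnDeriv lam =ᵐ[lam] fun ω => h' (T ω) := key.mono fun ω hω => hω.2
  haveI : IsFiniteMeasure lam := by rw [hlam]; infer_instance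
  have hmp := rnDeriv_map_aux P lam hPl hT hh hp
  have hmq := rnDeriv_map_aux Q lam hQl hT hh' hq
  have hmapadd : lam.map T = P.map T + Q.map T := by rw [hlam, Measure.map_add _ _ hT]
  have hdiv : ∀ e, h e / h' e = g e := by
    intro e
    by_cases hc : g e = ⊤
    · simp only [hh_def, hh'_def, hc, if_true, top_add, ENNReal.inv_top]
      exact ENNReal.div_zero one_ne_zero
    · have hne : g e + 1 ≠ 0 := by simp
      have hnt : g e + 1 ≠ ⊤ := by simp [hc]
      simp only [hh_def, hh'_def, hc, if_false]
      rw [div_eq_mul_inv, mul_assoc, inv_inv, ENNReal.inv_mul_cancel hne hnt, mul_one]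
  have hratio : rnRatio (P.map T) (Q.map T) =ᵐ[lam.map T] g := by
    show (fun e => (P.map T).rnDeriv (P.map T + Q.map T) e
        / (Q.map T).rnDeriv (P.map T + Q.map T) e) =ᵐ[lam.map T] g
    rw [← hmapadd]
    filter_upwards [hmp, hmq] with e h1 h2
    rw [h1, h2]; exact hdiv e
  have hPm : P.map T ≪ lam.map T := by
    rw [hmapadd]; exact Measure.absolutelyContinuous_of_le (Measure.le_add_right le_rfl)
  have hQm : Q.map T ≪ lam.map T := by
    rw [hmapadd]; exact Measure.absolutelyContinuous_of_le (Measure.le_add_left le_rfl)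
  have hmeas_pos : Measurable fun e => (extF f (g e)).toENNReal' :=
    measurable_toENNReal'.comp ((measurable_extF hfm).comp hg)
  have hmeas_neg : Measurable fun e => (-(extF f (g e))).toENNReal' :=
    measurable_toENNReal'.comp (measurable_neg.comp ((measurable_extF hfm).comp hg))
  have hrQ : rnRatio (P.map T) (Q.map T) =ᵐ[Q.map T] g := hratio.filter_mono hQm.ae_le
  have haeQ : rnRatio P Q =ᵐ[Q] fun ω => g (T ω) := hae.filter_mono hQl.ae_le
  have hterm1 : eInt (Q.map T) (fun e => extF f (rnRatio (P.map T) (Q.map T) e))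
      = eInt Q (fun ω => extF f (rnRatio P Q ω)) := by
    unfold eInt
    have e1 : ∫⁻ e, (extF f (rnRatio (P.map T) (Q.map T) e)).toENNReal' ∂(Q.map T)
        = ∫⁻ ω, (extF f (rnRatio P Q ω)).toENNReal' ∂Q := by
      rw [lintegral_congr_ae (hrQ.mono fun e he => by rw [he]), lintegral_map hmeas_pos hT]
      exact (lintegral_congr_ae (haeQ.mono fun ω hω => by rw [hω])).symm
    have e2 : ∫⁻ e, (-(extF f (rnRatio (P.map T) (Q.map T) e))).toENNReal' ∂(Q.map T)
        = ∫⁻ ω, (-(extF f (rnRatio P Q ω))).toENNReal' ∂Q := by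
      rw [lintegral_congr_ae (hrQ.mono fun e he => by rw [he]), lintegral_map hmeas_neg hT]
      exact (lintegral_congr_ae (haeQ.mono fun ω hω => by rw [hω])).symm
    rw [e1, e2]
  have hterm2 : (P.map T) {e | rnRatio (P.map T) (Q.map T) e = ⊤}
      = P {ω | rnRatio P Q ω = ⊤} := by
    have hrP : rnRatio (P.map T) (Q.map T) =ᵐ[P.map T] g := hratio.filter_mono hPm.ae_le
    have haeP : rnRatio P Q =ᵐ[P] fun ω => g (T ω) := hae.filter_mono hPl.ae_le
    have e1 : (P.map T) {e | rnRatio (P.map T) (Q.map T) e = ⊤} = (P.map T) {e | g e = ⊤} :=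
      measure_congr (Filter.eventuallyEq_set.mpr (hrP.mono fun e he => by simp [he]))
    have e2 : (P.map T) {e | g e = ⊤} = P {ω | g (T ω) = ⊤} := by
      have hset : {e | g e = ⊤} = g ⁻¹' {⊤} := rfl
      rw [hset, Measure.map_apply hT (hg (measurableSet_singleton ⊤))]; rfl
    have e3 : P {ω | g (T ω) = ⊤} = P {ω | rnRatio P Q ω = ⊤} :=
      (measure_congr (Filter.eventuallyEq_set.mpr (haeP.mono fun ω hω => by simp [hω]))).symm
    rw [e1, e2, e3]
  unfold fDiv
  rw [hterm1, hterm2]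

end AuxCore

section AuxFactor

lemma exists_factor_of_comap {α E : Type*} [mE : MeasurableSpace E] {Φ : α → E} {g : α → ℝ≥0∞}
    (hg : @Measurable α ℝ≥0∞ (mE.comap Φ) _ g) :
    ∃ g' : E → ℝ≥0∞, Measurable g' ∧ ∀ a, g a = g' (Φ a) := by
  have hS : ∀ q : ℚ, ∃ t : Set E, MeasurableSet t ∧
      Φ ⁻¹' t = g ⁻¹' Ioi (((q : ℝ).toNNReal : ℝ≥0∞)) := fun q =>
    MeasurableSpace.measurableSet_comap.mp (hg measurableSet_Ioi)
  choose t ht₁ ht₂ using hS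
  refine ⟨fun e => ⨆ q : ℚ, (t q).indicator (fun _ => (((q : ℝ).toNNReal : ℝ≥0∞))) e,
    Measurable.iSup fun q => measurable_const.indicator (ht₁ q), ?_⟩
  intro a
  apply le_antisymm
  · apply le_of_forall_lt
    intro c hc
    obtain ⟨q, _, hcq, hqg⟩ := ENNReal.lt_iff_exists_rat_btwn.mp hc
    have hmem : Φ a ∈ t q := by
      have ha : a ∈ g ⁻¹' Ioi (((q : ℝ).toNNReal : ℝ≥0∞)) := hqg
      rw [← ht₂ q] at ha; exact ha
    refine lt_of_lt_of_le hcq ?_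
    refine le_trans (le_of_eq ?_) (le_iSup _ q)
    rw [Set.indicator_of_mem hmem]
  · apply iSup_le
    intro q
    by_cases hm : Φ a ∈ t q
    · rw [Set.indicator_of_mem hm]
      have ha : a ∈ g ⁻¹' Ioi (((q : ℝ).toNNReal : ℝ≥0∞)) := by rw [← ht₂ q]; exact hm
      exact le_of_lt ha
    · rw [Set.indicator_of_notMem hm]; exact zero_le

lemma comap_prod_le {Ω₁ Ω₂ E₁ E₂ : Type*} [m₁ : MeasurableSpace E₁] [m₂ : MeasurableSpace E₂]
    (φ₁ : Ω₁ → E₁) (φ₂ : Ω₂ → E₂) :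
    MeasurableSpace.prod (MeasurableSpace.comap φ₁ m₁) (MeasurableSpace.comap φ₂ m₂) ≤
      MeasurableSpace.comap (Prod.map φ₁ φ₂) (inferInstance : MeasurableSpace (E₁ × E₂)) := by
  have h2 : MeasurableSpace.comap (Prod.map φ₁ φ₂) (inferInstance : MeasurableSpace (E₁ × E₂))
      = MeasurableSpace.comap (φ₁ ∘ Prod.fst) m₁ ⊔ MeasurableSpace.comap (φ₂ ∘ Prod.snd) m₂ := by
    have hi : (inferInstance : MeasurableSpace (E₁ × E₂))
        = m₁.comap Prod.fst ⊔ m₂.comap Prod.snd := rfl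
    rw [hi, MeasurableSpace.comap_sup, MeasurableSpace.comap_comp, MeasurableSpace.comap_comp]
    rfl
  have h1 : MeasurableSpace.prod (MeasurableSpace.comap φ₁ m₁) (MeasurableSpace.comap φ₂ m₂)
      = MeasurableSpace.comap (φ₁ ∘ Prod.fst) m₁ ⊔ MeasurableSpace.comap (φ₂ ∘ Prod.snd) m₂ := by
    show (MeasurableSpace.comap φ₁ m₁).comap Prod.fst
        ⊔ (MeasurableSpace.comap φ₂ m₂).comap Prod.snd = _
    rw [MeasurableSpace.comap_comp, MeasurableSpace.comap_comp]
  rw [h1, h2]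

end AuxFactor

section AuxTail

/-- Common tail for parts (i) and (ii): if the ratio factors through `Prod.map φ₁ φ₂` via a
measurable function, then the Csiszár index is invariant. -/
lemma csiszar_map_eq {Ω Ω₁ Ω₂ E₁ E₂ : Type*} [MeasurableSpace Ω] [MeasurableSpace Ω₁]
    [MeasurableSpace Ω₂] [MeasurableSpace E₁] [MeasurableSpace E₂]
    (μ : Measure Ω) [IsProbabilityMeasure μ] {f : ℝ → EReal} (hfm : Measurable f)
    {X₁ : Ω → Ω₁} {X₂ : Ω → Ω₂} {φ₁ : Ω₁ → E₁} {φ₂ : Ω₂ → E₂}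
    (hX₁ : Measurable X₁) (hX₂ : Measurable X₂) (hφ₁ : Measurable φ₁) (hφ₂ : Measurable φ₂)
    {g' : E₁ × E₂ → ℝ≥0∞} (hg' : Measurable g')
    (hae : rnRatio ((μ.map X₁).prod (μ.map X₂)) (μ.map fun ω => (X₁ ω, X₂ ω))
      =ᵐ[(μ.map X₁).prod (μ.map X₂) + (μ.map fun ω => (X₁ ω, X₂ ω))]
        fun x => g' (Prod.map φ₁ φ₂ x)) :
    csiszarIndex f μ X₁ X₂ = csiszarIndex f μ (fun ω => φ₁ (X₁ ω)) (fun ω => φ₂ (X₂ ω)) := by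
  haveI : IsProbabilityMeasure (μ.map X₁) := Measure.isProbabilityMeasure_map hX₁.aemeasurable
  haveI : IsProbabilityMeasure (μ.map X₂) := Measure.isProbabilityMeasure_map hX₂.aemeasurable
  haveI : IsProbabilityMeasure (μ.map fun ω => (X₁ ω, X₂ ω)) :=
    Measure.isProbabilityMeasure_map (hX₁.prodMk hX₂).aemeasurable
  have hΦ : Measurable (Prod.map φ₁ φ₂) := hφ₁.prodMap hφ₂
  have key := fDiv_map_eq hfm ((μ.map X₁).prod (μ.map X₂)) (μ.map fun ω => (X₁ ω, X₂ ω))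
    hΦ hg' hae
  have hm1 : μ.map (fun ω => φ₁ (X₁ ω)) = (μ.map X₁).map φ₁ := (Measure.map_map hφ₁ hX₁).symm
  have hm2 : μ.map (fun ω => φ₂ (X₂ ω)) = (μ.map X₂).map φ₂ := (Measure.map_map hφ₂ hX₂).symm
  have hm3 : μ.map (fun ω => (φ₁ (X₁ ω), φ₂ (X₂ ω)))
      = (μ.map fun ω => (X₁ ω, X₂ ω)).map (Prod.map φ₁ φ₂) :=
    (Measure.map_map hΦ (hX₁.prodMk hX₂)).symm
  unfold csiszarIndex
  rw [hm1, hm2, hm3, Measure.map_prod_map _ _ hφ₁ hφ₂]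
  exact key.symm

end AuxTail

section AuxIII

def eSwap (β₁ γ₁ β₂ γ₂ : Type*) [MeasurableSpace β₁] [MeasurableSpace γ₁]
    [MeasurableSpace β₂] [MeasurableSpace γ₂] :
    (β₁ × γ₁) × (β₂ × γ₂) ≃ᵐ (β₁ × β₂) × (γ₁ × γ₂) where
  toEquiv :=
    { toFun := fun p => ((p.1.1, p.2.1), (p.1.2, p.2.2))
      invFun := fun p => ((p.1.1, p.2.1), (p.1.2, p.2.2))
      left_inv := fun _ => rfl
      right_inv := fun _ => rfl }
  measurable_toFun :=
    ((measurable_fst.fst.prodMk measurable_snd.fst).prodMk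
      (measurable_fst.snd.prodMk measurable_snd.snd))
  measurable_invFun :=
    ((measurable_fst.fst.prodMk measurable_snd.fst).prodMk
      (measurable_fst.snd.prodMk measurable_snd.snd))

@[simp] lemma eSwap_apply {β₁ γ₁ β₂ γ₂ : Type*} [MeasurableSpace β₁] [MeasurableSpace γ₁]
    [MeasurableSpace β₂] [MeasurableSpace γ₂] (x : (β₁ × γ₁) × (β₂ × γ₂)) :
    eSwap β₁ γ₁ β₂ γ₂ x = ((x.1.1, x.2.1), (x.1.2, x.2.2)) := rfl

@[simp] lemma eSwap_symm_apply {β₁ γ₁ β₂ γ₂ : Type*} [MeasurableSpace β₁] [MeasurableSpace γ₁]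
    [MeasurableSpace β₂] [MeasurableSpace γ₂] (x : (β₁ × β₂) × (γ₁ × γ₂)) :
    (eSwap β₁ γ₁ β₂ γ₂).symm x = ((x.1.1, x.2.1), (x.1.2, x.2.2)) := rfl

lemma compProd_withDensity {α β : Type*} [MeasurableSpace α] [MeasurableSpace β]
    (μ : Measure α) [IsFiniteMeasure μ] (κ : Kernel α β) [IsMarkovKernel κ]
    {p : α → ℝ≥0∞} (hp : Measurable p) :
    (μ.withDensity p) ⊗ₘ κ = ((μ ⊗ₘ κ).withDensity fun x => p x.1) := by
  ext s hs
  rw [withDensity_apply _ hs, Measure.compProd_apply hs, ← lintegral_indicator hs,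
    Measure.lintegral_compProd (Measurable.indicator
      (show Measurable fun x : α × β => p x.1 from hp.comp measurable_fst) hs)]
  rw [lintegral_withDensity_eq_lintegral_mul _ hp (Kernel.measurable_kernel_prodMk_left hs)]
  refine lintegral_congr fun a => ?_
  have hind : ∀ b : β, s.indicator (fun x : α × β => p x.1) (a, b)
      = (Prod.mk a ⁻¹' s).indicator (fun _ => p a) b := by
    intro b
    by_cases hb : (a, b) ∈ s
    · rw [Set.indicator_of_mem hb, Set.indicator_of_mem (show b ∈ Prod.mk a ⁻¹' s from hb)]
    · rw [Set.indicator_of_notMem hb,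
        Set.indicator_of_notMem (show b ∉ Prod.mk a ⁻¹' s from hb)]
  rw [lintegral_congr hind, lintegral_indicator (measurable_prodMk_left hs),
    setLIntegral_const]
  rfl

lemma rnRatio_compProd {β γ : Type*} [MeasurableSpace β] [MeasurableSpace γ]
    (ν ρ : Measure β) [IsFiniteMeasure ν] [IsFiniteMeasure ρ]
    (κ : Kernel β γ) [IsMarkovKernel κ] :
    rnRatio (ν ⊗ₘ κ) (ρ ⊗ₘ κ) =ᵐ[(ν ⊗ₘ κ) + (ρ ⊗ₘ κ)] fun x => rnRatio ν ρ x.1 := by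
  have hsum : (ν ⊗ₘ κ) + (ρ ⊗ₘ κ) = (ν + ρ) ⊗ₘ κ := (Measure.compProd_add_left ν ρ κ).symm
  set lam := ν + ρ with hlam
  have hνl : ν ≪ lam := Measure.absolutelyContinuous_of_le (Measure.le_add_right le_rfl)
  have hρl : ρ ≪ lam := Measure.absolutelyContinuous_of_le (Measure.le_add_left le_rfl)
  have hν : ((lam ⊗ₘ κ).withDensity fun x => ν.rnDeriv lam x.1) = ν ⊗ₘ κ := by
    rw [← compProd_withDensity lam κ (Measure.measurable_rnDeriv ν lam),
      Measure.withDensity_rnDeriv_eq ν lam hνl]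
  have hρ : ((lam ⊗ₘ κ).withDensity fun x => ρ.rnDeriv lam x.1) = ρ ⊗ₘ κ := by
    rw [← compProd_withDensity lam κ (Measure.measurable_rnDeriv ρ lam),
      Measure.withDensity_rnDeriv_eq ρ lam hρl]
  have h1 : (ν ⊗ₘ κ).rnDeriv (lam ⊗ₘ κ) =ᵐ[lam ⊗ₘ κ] fun x => ν.rnDeriv lam x.1 := by
    conv_lhs => rw [← hν]
    exact Measure.rnDeriv_withDensity _ ((Measure.measurable_rnDeriv ν lam).comp measurable_fst)
  have h2 : (ρ ⊗ₘ κ).rnDeriv (lam ⊗ₘ κ) =ᵐ[lam ⊗ₘ κ] fun x => ρ.rnDeriv lam x.1 := by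
    conv_lhs => rw [← hρ]
    exact Measure.rnDeriv_withDensity _ ((Measure.measurable_rnDeriv ρ lam).comp measurable_fst)
  show (fun x => (ν ⊗ₘ κ).rnDeriv ((ν ⊗ₘ κ) + (ρ ⊗ₘ κ)) x
      / (ρ ⊗ₘ κ).rnDeriv ((ν ⊗ₘ κ) + (ρ ⊗ₘ κ)) x) =ᵐ[(ν ⊗ₘ κ) + (ρ ⊗ₘ κ)] _
  rw [hsum]
  filter_upwards [h1, h2] with x hx1 hx2
  rw [hx1, hx2]
  rfl

lemma prod_compProd_eq {β₁ γ₁ β₂ γ₂ : Type*} [MeasurableSpace β₁] [MeasurableSpace γ₁]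
    [MeasurableSpace β₂] [MeasurableSpace γ₂]
    (ν₁ : Measure β₁) (ν₂ : Measure β₂) [IsFiniteMeasure ν₁] [IsFiniteMeasure ν₂]
    (κ₁ : Kernel β₁ γ₁) (κ₂ : Kernel β₂ γ₂) [IsMarkovKernel κ₁] [IsMarkovKernel κ₂] :
    (ν₁ ⊗ₘ κ₁).prod (ν₂ ⊗ₘ κ₂)
      = (((ν₁.prod ν₂) ⊗ₘ ((κ₁.comap Prod.fst measurable_fst) ×ₖ
          (κ₂.comap Prod.snd measurable_snd))).map (eSwap β₁ γ₁ β₂ γ₂).symm) := by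
  refine Measure.prod_eq fun s t hs ht => ?_
  set e := eSwap β₁ γ₁ β₂ γ₂
  rw [Measure.map_apply e.symm.measurable (hs.prod ht),
    Measure.compProd_apply (e.symm.measurable (hs.prod ht))]
  have hpt : ∀ y : β₁ × β₂,
      (((κ₁.comap Prod.fst measurable_fst) ×ₖ (κ₂.comap Prod.snd measurable_snd)) y)
        (Prod.mk y ⁻¹' (⇑e.symm ⁻¹' s ×ˢ t))
      = (κ₁ y.1) (Prod.mk y.1 ⁻¹' s) * (κ₂ y.2) (Prod.mk y.2 ⁻¹' t) := by
    intro y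
    rw [Kernel.prod_apply, Kernel.comap_apply, Kernel.comap_apply]
    have hset : Prod.mk y ⁻¹' (⇑e.symm ⁻¹' s ×ˢ t)
        = (Prod.mk y.1 ⁻¹' s) ×ˢ (Prod.mk y.2 ⁻¹' t) := by
      ext ⟨w₁, w₂⟩
      simp [e, Set.mem_prod]
    rw [hset, Measure.prod_prod]
  rw [lintegral_congr hpt,
    lintegral_prod_mul (Kernel.measurable_kernel_prodMk_left hs).aemeasurable
      (Kernel.measurable_kernel_prodMk_left ht).aemeasurable,
    ← Measure.compProd_apply hs, ← Measure.compProd_apply ht]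

end AuxIII


/-- **Invariance of the Csiszár index.** (i) Marginal invariance: if
`d(P_{X₁} ⊗ P_{X₂})/dP_{(X₁,X₂)}` is `σ(φ₁) ⊗ σ(φ₂)`-measurable then
`S_f(X₁,X₂) = S_f(φ₁(X₁), φ₂(X₂))`. (ii) Invariance by injection: if each `φᵢ` is injective
and bi-measurable then `S_f(X₁,X₂) = S_f(φ₁(X₁), φ₂(X₂))`. (iii) Invariance for independent
Markovian kernels: if `Xᵢ = (Yᵢ, Wᵢ)` takes values in a Polish space and the conditional law
of `(W₁,W₂)` given `(Y₁,Y₂) = (y₁,y₂)` is `P_{W₁|Y₁=y₁} ⊗ P_{W₂|Y₂=y₂}`, then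
`S_f((Y₁,W₁),(Y₂,W₂)) = S_f(Y₁,Y₂)`. -/
theorem csiszarIndex_invariance
    {Ω Ω₁ Ω₂ E₁ E₂ : Type*} [MeasurableSpace Ω] [MeasurableSpace Ω₁] [MeasurableSpace Ω₂]
    [MeasurableSpace E₁] [MeasurableSpace E₂]
    {β₁ β₂ γ₁ γ₂ : Type*}
    [TopologicalSpace β₁] [PolishSpace β₁] [MeasurableSpace β₁] [BorelSpace β₁]
    [TopologicalSpace β₂] [PolishSpace β₂] [MeasurableSpace β₂] [BorelSpace β₂]
    [TopologicalSpace γ₁] [PolishSpace γ₁] [MeasurableSpace γ₁] [BorelSpace γ₁]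
    [TopologicalSpace γ₂] [PolishSpace γ₂] [MeasurableSpace γ₂] [BorelSpace γ₂]
    (μ : Measure Ω) [IsProbabilityMeasure μ] (f : ℝ → EReal) (hf : MemF f) :
    -- (i) Marginal invariance
    (∀ (X₁ : Ω → Ω₁) (X₂ : Ω → Ω₂) (φ₁ : Ω₁ → E₁) (φ₂ : Ω₂ → E₂),
      Measurable X₁ → Measurable X₂ → Measurable φ₁ → Measurable φ₂ →
      (∃ g : Ω₁ × Ω₂ → ℝ≥0∞,
        @Measurable _ _
          ((MeasurableSpace.comap φ₁ inferInstance).prod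
            (MeasurableSpace.comap φ₂ inferInstance)) _ g ∧
        rnRatio ((μ.map X₁).prod (μ.map X₂)) (μ.map fun ω => (X₁ ω, X₂ ω))
          =ᵐ[(μ.map X₁).prod (μ.map X₂) + μ.map fun ω => (X₁ ω, X₂ ω)] g) →
      csiszarIndex f μ X₁ X₂ = csiszarIndex f μ (fun ω => φ₁ (X₁ ω)) (fun ω => φ₂ (X₂ ω))) ∧
    -- (ii) Invariance by injection
    (∀ (X₁ : Ω → Ω₁) (X₂ : Ω → Ω₂) (φ₁ : Ω₁ → E₁) (φ₂ : Ω₂ → E₂),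
      Measurable X₁ → Measurable X₂ → Measurable φ₁ → Measurable φ₂ →
      Function.Injective φ₁ → Function.Injective φ₂ →
      (∀ A : Set Ω₁, MeasurableSet A → MeasurableSet (φ₁ '' A)) →
      (∀ A : Set Ω₂, MeasurableSet A → MeasurableSet (φ₂ '' A)) →
      csiszarIndex f μ X₁ X₂ = csiszarIndex f μ (fun ω => φ₁ (X₁ ω)) (fun ω => φ₂ (X₂ ω))) ∧
    -- (iii) Invariance for independent Markovian kernels
    (∀ (Y₁ : Ω → β₁) (Y₂ : Ω → β₂) (W₁ : Ω → γ₁) (W₂ : Ω → γ₂),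
      Measurable Y₁ → Measurable Y₂ → Measurable W₁ → Measurable W₂ →
      ∀ (κ₁ : ProbabilityTheory.Kernel β₁ γ₁) (κ₂ : ProbabilityTheory.Kernel β₂ γ₂),
      ProbabilityTheory.IsMarkovKernel κ₁ → ProbabilityTheory.IsMarkovKernel κ₂ →
      (μ.map fun ω => (Y₁ ω, W₁ ω)) = (μ.map Y₁).compProd κ₁ →
      (μ.map fun ω => (Y₂ ω, W₂ ω)) = (μ.map Y₂).compProd κ₂ →
      (μ.map fun ω => ((Y₁ ω, Y₂ ω), (W₁ ω, W₂ ω))) =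
        (μ.map fun ω => (Y₁ ω, Y₂ ω)).compProd
          (ProbabilityTheory.Kernel.prod
            (κ₁.comap Prod.fst measurable_fst) (κ₂.comap Prod.snd measurable_snd)) →
      csiszarIndex f μ (fun ω => (Y₁ ω, W₁ ω)) (fun ω => (Y₂ ω, W₂ ω)) =
        csiszarIndex f μ Y₁ Y₂) := by
  obtain ⟨hfm⟩ : Nonempty (Measurable f) := ⟨hf.measurable⟩
  refine ⟨?_, ?_, ?_⟩
  · -- (i) Marginal invariance
    rintro X₁ X₂ φ₁ φ₂ hX₁ hX₂ hφ₁ hφ₂ ⟨g, hgm, haeg⟩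
    have hgm' : @Measurable _ _
        (MeasurableSpace.comap (Prod.map φ₁ φ₂) inferInstance) _ g :=
      hgm.mono (comap_prod_le φ₁ φ₂) le_rfl
    obtain ⟨g', hg', hfac⟩ := exists_factor_of_comap hgm'
    exact csiszar_map_eq μ hfm hX₁ hX₂ hφ₁ hφ₂ hg'
      (haeg.trans (Filter.Eventually.of_forall fun x => hfac x))
  · -- (ii) Invariance by injection
    intro X₁ X₂ φ₁ φ₂ hX₁ hX₂ hφ₁ hφ₂ hinj₁ hinj₂ him₁ him₂
    have me₁ : MeasurableEmbedding φ₁ := ⟨hinj₁, hφ₁, fun s hs => him₁ s hs⟩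
    have me₂ : MeasurableEmbedding φ₂ := ⟨hinj₂, hφ₂, fun s hs => him₂ s hs⟩
    have meΦ : MeasurableEmbedding (Prod.map φ₁ φ₂) := MeasurableEmbedding.prodMap me₁ me₂
    obtain ⟨g', hg', hfac⟩ := meΦ.exists_measurable_extend
      (measurable_rnRatio ((μ.map X₁).prod (μ.map X₂)) (μ.map fun ω => (X₁ ω, X₂ ω)))
      (fun _ => ⟨0⟩)
    refine csiszar_map_eq μ hfm hX₁ hX₂ hφ₁ hφ₂ hg'
      (Filter.Eventually.of_forall fun x => ?_)
    exact (congrFun hfac x).symm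
  · -- (iii) Invariance for independent Markovian kernels
    intro Y₁ Y₂ W₁ W₂ hY₁ hY₂ hW₁ hW₂ κ₁ κ₂ hκ₁ hκ₂ h1 h2 h3
    haveI := hκ₁; haveI := hκ₂
    set e := eSwap β₁ γ₁ β₂ γ₂ with he
    set κ : Kernel (β₁ × β₂) (γ₁ × γ₂) :=
      (κ₁.comap Prod.fst measurable_fst) ×ₖ (κ₂.comap Prod.snd measurable_snd) with hκ
    set P := (μ.map fun ω => (Y₁ ω, W₁ ω)).prod (μ.map fun ω => (Y₂ ω, W₂ ω)) with hP
    set Q := μ.map fun ω => ((Y₁ ω, W₁ ω), (Y₂ ω, W₂ ω)) with hQ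
    haveI : IsProbabilityMeasure (μ.map fun ω => (Y₁ ω, W₁ ω)) :=
      Measure.isProbabilityMeasure_map (hY₁.prodMk hW₁).aemeasurable
    haveI : IsProbabilityMeasure (μ.map fun ω => (Y₂ ω, W₂ ω)) :=
      Measure.isProbabilityMeasure_map (hY₂.prodMk hW₂).aemeasurable
    haveI : IsProbabilityMeasure (μ.map Y₁) := Measure.isProbabilityMeasure_map hY₁.aemeasurable
    haveI : IsProbabilityMeasure (μ.map Y₂) := Measure.isProbabilityMeasure_map hY₂.aemeasurable
    haveI : IsProbabilityMeasure (μ.map fun ω => (Y₁ ω, Y₂ ω)) :=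
      Measure.isProbabilityMeasure_map (hY₁.prodMk hY₂).aemeasurable
    haveI : IsProbabilityMeasure Q :=
      Measure.isProbabilityMeasure_map
        (((hY₁.prodMk hW₁).prodMk (hY₂.prodMk hW₂)).aemeasurable)
    have hPe : P.map e = ((μ.map Y₁).prod (μ.map Y₂)) ⊗ₘ κ := by
      rw [hP, h1, h2]
      rw [show (μ.map Y₁).compProd κ₁ = (μ.map Y₁) ⊗ₘ κ₁ from rfl,
        show (μ.map Y₂).compProd κ₂ = (μ.map Y₂) ⊗ₘ κ₂ from rfl,
        prod_compProd_eq, ← hκ, Measure.map_map e.measurable e.symm.measurable]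
      have hid : ⇑e ∘ ⇑e.symm = id := funext fun x => e.apply_symm_apply x
      rw [hid, Measure.map_id]
    have hQe : Q.map e = (μ.map fun ω => (Y₁ ω, Y₂ ω)) ⊗ₘ κ := by
      rw [hQ, Measure.map_map e.measurable
        ((hY₁.prodMk hW₁).prodMk (hY₂.prodMk hW₂))]
      have hcomp : ⇑e ∘ (fun ω => ((Y₁ ω, W₁ ω), (Y₂ ω, W₂ ω)))
          = fun ω => ((Y₁ ω, Y₂ ω), (W₁ ω, W₂ ω)) := rfl
      rw [hcomp, h3]
    have step2 : fDiv f P Q = fDiv f (P.map e) (Q.map e) := by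
      refine (fDiv_map_eq hfm P Q e.measurable
        ((measurable_rnRatio P Q).comp e.symm.measurable) ?_).symm
      exact Filter.Eventually.of_forall fun x => by
        show rnRatio P Q x = rnRatio P Q (e.symm (e x))
        rw [e.symm_apply_apply]
    have step3 : fDiv f (P.map e) (Q.map e)
        = fDiv f ((μ.map Y₁).prod (μ.map Y₂)) (μ.map fun ω => (Y₁ ω, Y₂ ω)) := by
      rw [hPe, hQe]
      set ν := (μ.map Y₁).prod (μ.map Y₂) with hν
      set ρ := μ.map fun ω => (Y₁ ω, Y₂ ω) with hρ
      have key := fDiv_map_eq (E := β₁ × β₂) hfm (ν ⊗ₘ κ) (ρ ⊗ₘ κ) measurable_fst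
        (measurable_rnRatio ν ρ) (rnRatio_compProd ν ρ κ)
      have e1 : (ν ⊗ₘ κ).map Prod.fst = ν := Measure.fst_compProd ν κ
      have e2 : (ρ ⊗ₘ κ).map Prod.fst = ρ := Measure.fst_compProd ρ κ
      rw [e1, e2] at key
      exact key.symm
    show fDiv f P Q = csiszarIndex f μ Y₁ Y₂
    rw [step2, step3]
    rfl
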